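/- arXiv:1507.00636 — 3 statements merged into one kernel-verified Lean document; each statement's English description precedes it below -/
import Mathlib

section
/- Let S⁽ⁿ⁾ be the Sylvester matrix of order 2ⁿ and α_i⁽ⁿ⁾(m) = ∑_{k=1}^m S⁽ⁿ⁾_{k i}. Then for every column i with 2 ≤ i ≤ 2ⁿ, one has max_{1 ≤ m ≤ 2^{n+1}} |α_{2ⁿ+i}⁽ⁿ⁺¹⁾(m)| = max_{1 ≤ m ≤ 2^{n+1}} |α_i⁽ⁿ⁺¹⁾(m)| = max_{1 ≤ m ≤ 2ⁿ} |α_i⁽ⁿ⁾(m)|. -/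
/-- The Sylvester matrix of order `2 ^ n`, with rows and columns indexed by
`1, …, 2 ^ n`.  It is defined by the recursion
`S⁽ⁿ⁺¹⁾ = [[S⁽ⁿ⁾, S⁽ⁿ⁾], [S⁽ⁿ⁾, -S⁽ⁿ⁾]]` starting from the `1 × 1` matrix `[1]`
(so that `S⁽¹⁾ = [[1, 1], [1, -1]]`). -/
def Syl : ℕ → ℕ → ℕ → ℝ
  | 0, _, _ => 1
  | n + 1, k, i =>
    if k ≤ 2 ^ n then
      if i ≤ 2 ^ n then Syl n k i else Syl n k (i - 2 ^ n)
    else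
      if i ≤ 2 ^ n then Syl n (k - 2 ^ n) i else -Syl n (k - 2 ^ n) (i - 2 ^ n)

/-- `maxAbs n i = max_{1 ≤ m ≤ 2^n} |α_i⁽ⁿ⁾(m)|`, where
`α_i⁽ⁿ⁾(m) = ∑_{k=1}^m S⁽ⁿ⁾_{k i}` is a partial column sum of the Sylvester
matrix of order `2 ^ n`. -/
noncomputable def maxAbs (n i : ℕ) : ℝ :=
  (Finset.Icc 1 (2 ^ n)).sup' ⟨1, by simp [Nat.one_le_two_pow]⟩
    fun m => |∑ k ∈ Finset.Icc 1 m, Syl n k i|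


/-!
Column `i ≤ 2ⁿ` of `S⁽ⁿ⁺¹⁾` is column `i` of `S⁽ⁿ⁾` stacked on itself, and column `2ⁿ + i` is
column `i` stacked on its negative. For `i ≥ 2` the full column sum `α_i⁽ⁿ⁾(2ⁿ)` vanishes,
so on the lower half the partial sums are
`α_i⁽ⁿ⁾(2ⁿ) ± α_i⁽ⁿ⁾(m) = ± α_i⁽ⁿ⁾(m)`: both columns of `S⁽ⁿ⁺¹⁾` take the same absolute
partial sums as column `i` of `S⁽ⁿ⁾`, hence have the same maximum.
-/

open Finset

theorem Finset.sum_Icc_one_add {M : Type*} [AddCommMonoid M] (f : ℕ → M) (N m : ℕ) :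
    ∑ k ∈ Icc 1 (N + m), f k = ∑ k ∈ Icc 1 N, f k + ∑ k ∈ Icc 1 m, f (N + k) := by
  induction m with
  | zero => simp
  | succ m ih =>
    rw [← add_assoc, sum_Icc_succ_top (by omega), ih, sum_Icc_succ_top (by omega), add_assoc,
      add_assoc]

/-- Stated with `N * 2` because `2 ^ (n + 1)` unfolds definitionally to `2 ^ n * 2`. -/
theorem Finset.sup'_Icc_one_mul_two {α : Type*} [SemilatticeSup α] {N : ℕ}
    (h₁ : (Icc 1 (N * 2)).Nonempty) (h₂ : (Icc 1 N).Nonempty) {u v : ℕ → α}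
    (h : ∀ m ∈ Icc 1 N, u m = v m ∧ u (N + m) = v m) :
    (Icc 1 (N * 2)).sup' h₁ u = (Icc 1 N).sup' h₂ v := by
  refine le_antisymm (sup'_le _ _ fun m hm => ?_) (sup'_le _ _ fun m hm => ?_)
  · rw [mem_Icc] at hm
    by_cases hmN : m ≤ N
    · exact (h m (mem_Icc.2 ⟨hm.1, hmN⟩)).1 ▸ le_sup' v (mem_Icc.2 ⟨hm.1, hmN⟩)
    · obtain ⟨m', rfl⟩ : ∃ m', m = N + m' := ⟨m - N, by omega⟩
      have hm' : m' ∈ Icc 1 N := mem_Icc.2 ⟨by omega, by omega⟩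
      exact (h m' hm').2 ▸ le_sup' v hm'
  · have hm' : m ∈ Icc 1 (N * 2) := by rw [mem_Icc] at hm ⊢; omega
    exact (h m hm).1 ▸ le_sup' u hm'

section Sylvester

variable {n k i m : ℕ}

theorem Syl_succ_of_le_of_le (hk : k ≤ 2 ^ n) (hi : i ≤ 2 ^ n) :
    Syl (n + 1) k i = Syl n k i := by
  simp [Syl, hk, hi]

theorem Syl_succ_of_le_add (hk : k ≤ 2 ^ n) (hi : 1 ≤ i) :
    Syl (n + 1) k (2 ^ n + i) = Syl n k i := by
  simp [Syl, hk, show ¬2 ^ n + i ≤ 2 ^ n by omega]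

theorem Syl_succ_add_of_le (hk : 1 ≤ k) (hi : i ≤ 2 ^ n) :
    Syl (n + 1) (2 ^ n + k) i = Syl n k i := by
  simp [Syl, hi, show ¬2 ^ n + k ≤ 2 ^ n by omega]

theorem Syl_succ_add_add (hk : 1 ≤ k) (hi : 1 ≤ i) :
    Syl (n + 1) (2 ^ n + k) (2 ^ n + i) = -Syl n k i := by
  simp [Syl, show ¬2 ^ n + k ≤ 2 ^ n by omega, show ¬2 ^ n + i ≤ 2 ^ n by omega]

/-- The paper's `α_i⁽ⁿ⁾(m)`. -/
noncomputable def colPartialSum (n i m : ℕ) : ℝ :=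
  ∑ k ∈ Icc 1 m, Syl n k i

theorem colPartialSum_succ_of_le (hi : i ≤ 2 ^ n) (hm : m ≤ 2 ^ n) :
    colPartialSum (n + 1) i m = colPartialSum n i m :=
  sum_congr rfl fun _ hk => Syl_succ_of_le_of_le ((mem_Icc.1 hk).2.trans hm) hi

theorem colPartialSum_succ_two_pow_add (hi : i ≤ 2 ^ n) :
    colPartialSum (n + 1) i (2 ^ n + m) = colPartialSum n i (2 ^ n) + colPartialSum n i m := by
  rw [colPartialSum, sum_Icc_one_add]
  exact congrArg₂ (· + ·) (colPartialSum_succ_of_le hi le_rfl)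
    (sum_congr rfl fun _ hk => Syl_succ_add_of_le (mem_Icc.1 hk).1 hi)

theorem colPartialSum_succ_add_of_le (hi : 1 ≤ i) (hm : m ≤ 2 ^ n) :
    colPartialSum (n + 1) (2 ^ n + i) m = colPartialSum n i m :=
  sum_congr rfl fun _ hk => Syl_succ_of_le_add ((mem_Icc.1 hk).2.trans hm) hi

theorem colPartialSum_succ_add_two_pow_add (hi : 1 ≤ i) :
    colPartialSum (n + 1) (2 ^ n + i) (2 ^ n + m) =
      colPartialSum n i (2 ^ n) - colPartialSum n i m := by
  rw [colPartialSum, sum_Icc_one_add, sub_eq_add_neg]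
  refine congrArg₂ (· + ·) (colPartialSum_succ_add_of_le hi le_rfl) ?_
  rw [colPartialSum, ← sum_neg_distrib]
  exact sum_congr rfl fun _ hk => Syl_succ_add_add (mem_Icc.1 hk).1 hi

theorem colPartialSum_two_pow_eq_zero (hi₁ : 2 ≤ i) (hi₂ : i ≤ 2 ^ n) :
    colPartialSum n i (2 ^ n) = 0 := by
  induction n generalizing i with
  | zero => omega
  | succ n ih =>
    rw [pow_succ, mul_two]
    by_cases hi : i ≤ 2 ^ n
    · rw [colPartialSum_succ_two_pow_add hi, ih hi₁ hi, add_zero]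
    · obtain ⟨j, rfl⟩ : ∃ j, i = 2 ^ n + j := ⟨i - 2 ^ n, by omega⟩
      rw [colPartialSum_succ_add_two_pow_add (by omega), sub_self]

theorem maxAbs_succ_eq {c : ℕ}
    (h : ∀ m ∈ Icc 1 (2 ^ n), |colPartialSum (n + 1) c m| = |colPartialSum n i m| ∧
      |colPartialSum (n + 1) c (2 ^ n + m)| = |colPartialSum n i m|) :
    maxAbs (n + 1) c = maxAbs n i :=
  sup'_Icc_one_mul_two (N := 2 ^ n) _ _ h

end Sylvester

/-- For every column `2 ≤ i ≤ 2 ^ n`, the maximal absolute partial column sums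
of the Sylvester matrices satisfy
`max_m |α_{2^n + i}⁽ⁿ⁺¹⁾(m)| = max_m |α_i⁽ⁿ⁺¹⁾(m)| = max_m |α_i⁽ⁿ⁾(m)|`. -/
theorem sylvester_maxAbs_step (n : ℕ) (i : ℕ) (hi₁ : 2 ≤ i) (hi₂ : i ≤ 2 ^ n) :
    maxAbs (n + 1) (2 ^ n + i) = maxAbs (n + 1) i ∧
    maxAbs (n + 1) i = maxAbs n i := by
  have hzero := colPartialSum_two_pow_eq_zero hi₁ hi₂
  have hleft : maxAbs (n + 1) i = maxAbs n i := maxAbs_succ_eq fun m hm =>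
    ⟨by rw [colPartialSum_succ_of_le hi₂ (mem_Icc.1 hm).2],
      by rw [colPartialSum_succ_two_pow_add hi₂, hzero, zero_add]⟩
  have hright : maxAbs (n + 1) (2 ^ n + i) = maxAbs n i := maxAbs_succ_eq fun m hm =>
    ⟨by rw [colPartialSum_succ_add_of_le (by omega) (mem_Icc.1 hm).2],
      by rw [colPartialSum_succ_add_two_pow_add (by omega), hzero, zero_sub, abs_neg]⟩
  exact ⟨hright.trans hleft.symm, hleft⟩
end

section
/- Let S⁽ⁿ⁾ be the Sylvester matrix of order 2ⁿ and α_i⁽ⁿ⁾(m) = ∑_{k=1}^m S⁽ⁿ⁾_{k i}. Write i − 1 in binary. Then max_{1 ≤ m ≤ 2ⁿ} |α_i⁽ⁿ⁾(m)| = 2^{f(i)}, where f(1) = n; f(i) = 0 if i is even; and if i > 1 is odd, f(i) is the least positive integer j such that the coefficient of 2^j in the binary expansion of i is 1 (i.e., i = …+ 2^{f(i)} + 1 with zero digits in positions 1,…,f(i)−1). -/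
/-!
Column `i ≤ 2ⁿ` of `S⁽ⁿ⁺¹⁾` is column `i` of `S⁽ⁿ⁾` written twice, and column `2ⁿ + i` is
column `i` of `S⁽ⁿ⁾` followed by its negative. Every column of `S⁽ⁿ⁾` except the first sums to
zero, so for `2 ≤ i ≤ 2ⁿ` the partial sums over the lower half repeat those over the upper half
up to sign, and the maximum does not change from `S⁽ⁿ⁾` to `S⁽ⁿ⁺¹⁾`. Column `2ⁿ + 1` has partial
sums `m` and then `2ⁿ - m`, whose maximum is `2ⁿ`. By induction on `n`, the maximum for column
`j + 1` with `0 < j < 2ⁿ` is `2 ^ ν₂(j)`, and the exponent `f(i)` of the statement is `ν₂(i - 1)`.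
-/

open Finset

namespace Finset

theorem Icc_one_add_eq_union (a b : ℕ) :
    Icc 1 (a + b) = Icc 1 a ∪ (Icc 1 b).map (addLeftEmbedding a) := by
  ext k
  simp only [mem_union, mem_Icc, mem_map, addLeftEmbedding_apply]
  constructor
  · intro hk
    by_cases hka : k ≤ a
    · exact Or.inl ⟨hk.1, hka⟩
    · exact Or.inr ⟨k - a, by omega, by omega⟩
  · rintro (hk | ⟨l, hl, rfl⟩) <;> omega

theorem sum_Icc_one_add_s10 {M : Type*} [AddCommMonoid M] (g : ℕ → M) (a b : ℕ) :
    ∑ k ∈ Icc 1 (a + b), g k = ∑ k ∈ Icc 1 a, g k + ∑ k ∈ Icc 1 b, g (a + k) := by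
  rw [Icc_one_add_eq_union, sum_union, sum_map]
  · rfl
  · simp only [disjoint_left, mem_Icc, mem_map, addLeftEmbedding_apply]
    rintro k hk ⟨l, hl, rfl⟩
    omega

theorem sup'_Icc_one_add {α : Type*} [SemilatticeSup α] (g : ℕ → α) {a b : ℕ}
    (ha : 1 ≤ a) (hb : 1 ≤ b) :
    (Icc 1 (a + b)).sup' (nonempty_Icc.2 (by omega)) g =
      (Icc 1 a).sup' (nonempty_Icc.2 ha) g ⊔
        (Icc 1 b).sup' (nonempty_Icc.2 hb) fun m => g (a + m) := by
  rw [sup'_congr _ (Icc_one_add_eq_union a b) fun _ _ => rfl, sup'_union _ (by simpa), sup'_map]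
  rfl

end Finset

theorem padicValNat_pow_add {p n j : ℕ} (hp : 1 < p) (hj₀ : 0 < j) (hj : j < p ^ n) :
    padicValNat p (p ^ n + j) = padicValNat p j := by
  set v := padicValNat p j
  have hvn : v < n :=
    (Nat.pow_lt_pow_iff_right hp).1 <| (Nat.le_of_dvd hj₀ pow_padicValNat_dvd).trans_lt hj
  have hdvd : p ^ v ∣ p ^ n + j := dvd_add (pow_dvd_pow p hvn.le) pow_padicValNat_dvd
  have hndvd : ¬p ^ (v + 1) ∣ p ^ n + j := by
    rw [Nat.dvd_add_right (pow_dvd_pow p hvn),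
      padicValNat_dvd_iff_le_of_ne_one hp.ne' hj₀.ne']
    omega
  rw [padicValNat_dvd_iff_le_of_ne_one hp.ne' (by omega)] at hdvd hndvd
  omega

theorem padicValNat_two_eq_of_testBit {x f : ℕ} (hf : x.testBit f = true)
    (hlow : ∀ j < f, x.testBit j = false) : padicValNat 2 x = f := by
  have hx : x ≠ 0 := by rintro rfl; simp at hf
  have hdvd : 2 ^ f ∣ x := by
    refine Nat.dvd_of_mod_eq_zero (Nat.eq_of_testBit_eq fun j => ?_)
    rw [Nat.testBit_mod_two_pow, Nat.zero_testBit]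
    by_cases hj : j < f
    · simp [hj, hlow j hj]
    · simp [hj]
  have hndvd : ¬2 ^ (f + 1) ∣ x := by
    intro h
    have := Nat.testBit_mod_two_pow x (f + 1) f
    rw [Nat.mod_eq_zero_of_dvd h, Nat.zero_testBit, hf] at this
    simp at this
  rw [padicValNat_dvd_iff_le hx] at hdvd hndvd
  omega

theorem Syl_succ_top_left {n k i : ℕ} (hk : k ≤ 2 ^ n) (hi : i ≤ 2 ^ n) :
    Syl (n + 1) k i = Syl n k i := by
  rw [Syl, if_pos hk, if_pos hi]

theorem Syl_succ_top_right {n k i : ℕ} (hk : k ≤ 2 ^ n) (hi : 1 ≤ i) :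
    Syl (n + 1) k (2 ^ n + i) = Syl n k i := by
  rw [Syl, if_pos hk, if_neg (by omega), Nat.add_sub_cancel_left]

theorem Syl_succ_bottom_left {n k i : ℕ} (hk : 1 ≤ k) (hi : i ≤ 2 ^ n) :
    Syl (n + 1) (2 ^ n + k) i = Syl n k i := by
  rw [Syl, if_neg (by omega), if_pos hi, Nat.add_sub_cancel_left]

theorem Syl_succ_bottom_right {n k i : ℕ} (hk : 1 ≤ k) (hi : 1 ≤ i) :
    Syl (n + 1) (2 ^ n + k) (2 ^ n + i) = -Syl n k i := by
  rw [Syl, if_neg (by omega), if_neg (by omega), Nat.add_sub_cancel_left,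
    Nat.add_sub_cancel_left]

theorem Syl_col_one (n k : ℕ) : Syl n k 1 = 1 := by
  induction n generalizing k with
  | zero => rfl
  | succ n ih =>
    rw [Syl]
    split_ifs <;> simp_all [Nat.one_le_two_pow]

def partialColSum (n i m : ℕ) : ℝ := ∑ k ∈ Icc 1 m, Syl n k i

theorem partialColSum_one (n m : ℕ) : partialColSum n 1 m = m := by
  simp [partialColSum, Syl_col_one]

section partialColSum_succ

variable {n i m : ℕ}

theorem partialColSum_succ_of_le (hi : i ≤ 2 ^ n) (hm : m ≤ 2 ^ n) :
    partialColSum (n + 1) i m = partialColSum n i m :=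
  sum_congr rfl fun _ hk => Syl_succ_top_left ((mem_Icc.1 hk).2.trans hm) hi

theorem partialColSum_succ_two_pow_add_of_le (hi : 1 ≤ i) (hm : m ≤ 2 ^ n) :
    partialColSum (n + 1) (2 ^ n + i) m = partialColSum n i m :=
  sum_congr rfl fun _ hk => Syl_succ_top_right ((mem_Icc.1 hk).2.trans hm) hi

theorem partialColSum_succ_add_two_pow (hi : i ≤ 2 ^ n) :
    partialColSum (n + 1) i (2 ^ n + m) = partialColSum n i (2 ^ n) + partialColSum n i m := by
  rw [partialColSum, sum_Icc_one_add_s10]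
  congr 1
  · exact partialColSum_succ_of_le hi le_rfl
  · exact sum_congr rfl fun _ hk => Syl_succ_bottom_left (mem_Icc.1 hk).1 hi

theorem partialColSum_succ_two_pow_add_add_two_pow (hi : 1 ≤ i) :
    partialColSum (n + 1) (2 ^ n + i) (2 ^ n + m) =
      partialColSum n i (2 ^ n) - partialColSum n i m := by
  simp only [partialColSum, sum_Icc_one_add_s10, sub_eq_add_neg, ← sum_neg_distrib]
  congr 1
  · exact partialColSum_succ_two_pow_add_of_le hi le_rfl
  · exact sum_congr rfl fun _ hk => Syl_succ_bottom_right (mem_Icc.1 hk).1 hi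

end partialColSum_succ

theorem partialColSum_two_pow {n i : ℕ} (h₂ : 2 ≤ i) (hi : i ≤ 2 ^ n) :
    partialColSum n i (2 ^ n) = 0 := by
  induction n generalizing i with
  | zero => simp at hi; omega
  | succ n ih =>
    rw [pow_succ, mul_two]
    by_cases hin : i ≤ 2 ^ n
    · rw [partialColSum_succ_add_two_pow hin, ih h₂ hin, add_zero]
    · obtain ⟨i, rfl⟩ := Nat.exists_eq_add_of_lt (not_le.1 hin)
      rw [add_assoc, partialColSum_succ_two_pow_add_add_two_pow (by omega), sub_self]

theorem maxAbs_succ (n i : ℕ) :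
    maxAbs (n + 1) i =
      (Icc 1 (2 ^ n)).sup' (nonempty_Icc.2 Nat.one_le_two_pow)
          (fun m => |partialColSum (n + 1) i m|) ⊔
        (Icc 1 (2 ^ n)).sup' (nonempty_Icc.2 Nat.one_le_two_pow)
          fun m => |partialColSum (n + 1) i (2 ^ n + m)| := by
  rw [← sup'_Icc_one_add _ Nat.one_le_two_pow Nat.one_le_two_pow]
  exact sup'_congr _ (by rw [pow_succ, mul_two]) fun _ _ => rfl

theorem le_maxAbs {n i m : ℕ} (hm : m ∈ Icc 1 (2 ^ n)) : |partialColSum n i m| ≤ maxAbs n i :=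
  le_sup' (fun m => |partialColSum n i m|) hm

theorem maxAbs_one (n : ℕ) : maxAbs n 1 = 2 ^ n := by
  apply le_antisymm
  · refine sup'_le _ _ fun m hm => ?_
    rw [← partialColSum, partialColSum_one, Nat.abs_cast]
    exact_mod_cast (mem_Icc.1 hm).2
  · calc (2 : ℝ) ^ n = |partialColSum n 1 (2 ^ n)| := by simp [partialColSum_one]
      _ ≤ maxAbs n 1 := le_maxAbs (right_mem_Icc.2 Nat.one_le_two_pow)

section maxAbs_succ

variable {n i : ℕ}

theorem maxAbs_succ_eq_of_forall_le {i' : ℕ}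
    (hlow : ∀ m ≤ 2 ^ n, partialColSum (n + 1) i m = partialColSum n i' m)
    (hhigh : ∀ m ∈ Icc 1 (2 ^ n), |partialColSum (n + 1) i (2 ^ n + m)| ≤ maxAbs n i') :
    maxAbs (n + 1) i = maxAbs n i' := by
  have hfirst : (Icc 1 (2 ^ n)).sup' (nonempty_Icc.2 Nat.one_le_two_pow)
      (fun m => |partialColSum (n + 1) i m|) = maxAbs n i' :=
    sup'_congr _ rfl fun m hm => congrArg abs (hlow m (mem_Icc.1 hm).2)
  rw [maxAbs_succ, hfirst, sup_eq_left.2 (sup'_le _ _ hhigh)]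

theorem maxAbs_succ_of_le (h₂ : 2 ≤ i) (hi : i ≤ 2 ^ n) : maxAbs (n + 1) i = maxAbs n i :=
  maxAbs_succ_eq_of_forall_le (fun _ hm => partialColSum_succ_of_le hi hm) fun m hm => by
    rw [partialColSum_succ_add_two_pow hi, partialColSum_two_pow h₂ hi, zero_add]
    exact le_maxAbs hm

theorem maxAbs_succ_two_pow_add (h₂ : 2 ≤ i) (hi : i ≤ 2 ^ n) :
    maxAbs (n + 1) (2 ^ n + i) = maxAbs n i :=
  maxAbs_succ_eq_of_forall_le (fun _ hm => partialColSum_succ_two_pow_add_of_le (by omega) hm)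
    fun m hm => by
      rw [partialColSum_succ_two_pow_add_add_two_pow (by omega), partialColSum_two_pow h₂ hi,
        zero_sub, abs_neg]
      exact le_maxAbs hm

end maxAbs_succ

theorem maxAbs_succ_two_pow_add_one (n : ℕ) : maxAbs (n + 1) (2 ^ n + 1) = 2 ^ n := by
  rw [← maxAbs_one n]
  refine maxAbs_succ_eq_of_forall_le
    (fun _ hm => partialColSum_succ_two_pow_add_of_le le_rfl hm) fun m hm => ?_
  have hm' : (m : ℝ) ≤ 2 ^ n := by exact_mod_cast (mem_Icc.1 hm).2
  rw [partialColSum_succ_two_pow_add_add_two_pow le_rfl, partialColSum_one, partialColSum_one,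
    maxAbs_one, abs_le]
  push_cast
  constructor <;> linarith [m.cast_nonneg (α := ℝ)]

theorem maxAbs_add_one_eq_two_pow_padicValNat {n j : ℕ} (hj₀ : 0 < j) (hj : j < 2 ^ n) :
    maxAbs n (j + 1) = 2 ^ padicValNat 2 j := by
  induction n generalizing j with
  | zero => simp at hj; omega
  | succ n ih =>
    rcases lt_trichotomy j (2 ^ n) with hlt | rfl | hgt
    · rw [maxAbs_succ_of_le (by omega) hlt, ih hj₀ hlt]
    · rw [maxAbs_succ_two_pow_add_one, padicValNat.prime_pow]
    · obtain ⟨j, rfl⟩ := Nat.exists_eq_add_of_le hgt.le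
      rw [pow_succ, mul_two] at hj
      rw [add_assoc, maxAbs_succ_two_pow_add (by omega) (by omega), ih (by omega) (by omega),
        padicValNat_pow_add one_lt_two (by omega) (by omega)]

theorem padicValNat_two_sub_one {i f : ℕ} (hodd : i % 2 = 1) (hf₀ : 0 < f)
    (hf : i.testBit f = true) (hlow : ∀ j, 0 < j → j < f → i.testBit j = false) :
    padicValNat 2 (i - 1) = f := by
  have hsucc (j : ℕ) : (i - 1).testBit (j + 1) = i.testBit (j + 1) := by
    rw [Nat.testBit_succ, Nat.testBit_succ, show (i - 1) / 2 = i / 2 by omega]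
  obtain ⟨f, rfl⟩ := Nat.exists_eq_add_of_lt hf₀
  refine padicValNat_two_eq_of_testBit (by rwa [hsucc]) fun j hj => ?_
  rcases j with _ | j
  · simp only [Nat.testBit_zero, decide_eq_false_iff_not]
    omega
  · rw [hsucc, hlow _ j.succ_pos hj]

/-- `max_{1 ≤ m ≤ 2^n} |α_i⁽ⁿ⁾(m)| = 2 ^ f(i)`, where `f(1) = n`, `f(i) = 0`
for even `i`, and for odd `i > 1`, `f(i)` is the least positive integer `j`
such that the binary digit of `i` in position `j` is `1`. -/
theorem sylvester_maxAbs_eq_pow (n : ℕ) (i : ℕ) (hi₁ : 1 ≤ i) (hi₂ : i ≤ 2 ^ n)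
    (f : ℕ)
    (hf : (i = 1 ∧ f = n) ∨
          (i ≠ 1 ∧ i % 2 = 0 ∧ f = 0) ∨
          (i ≠ 1 ∧ i % 2 = 1 ∧ 0 < f ∧ Nat.testBit i f = true ∧
            ∀ j, 0 < j → j < f → Nat.testBit i j = false)) :
    maxAbs n i = (2 : ℝ) ^ f := by
  rcases hf with ⟨rfl, rfl⟩ | ⟨hne, hf⟩ | ⟨hne, hf⟩
  · exact maxAbs_one _
  all_goals
    rw [← Nat.sub_add_cancel hi₁, maxAbs_add_one_eq_two_pow_padicValNat (by omega) (by omega)]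
  · rw [hf.2, padicValNat.eq_zero_of_not_dvd (by omega)]
  · rw [padicValNat_two_sub_one hf.1 hf.2.1 hf.2.2.1 hf.2.2.2]
end

section
/- Let H be an n×n Hadamard matrix, p ≥ 2 a real number, and for each m ≤ n let v(m) be the vector in ℝⁿ with coordinates v(m)_i = ∑_{k=1}^m H_{k i}. Then max_{1 ≤ m ≤ n} ‖v(m)‖_{ℓ_p} ≤ n, where ‖·‖_{ℓ_p} is the p-norm on ℝⁿ. -/
/-!
Write `v = ∑_{k < m} H_k` for the sum of the first `m` rows. Orthogonality of the rows gives
`‖v‖₂² = m n`, and since the entries are `±1`, `‖v‖_∞ ≤ m ≤ n`. For `p ≥ 2` the interpolation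
`‖v‖_p^p ≤ ‖v‖_∞^(p-2) ‖v‖₂²` then yields `‖v‖_p^p ≤ n^(p-2) · n · n = n^p`.
-/

/-- A Hadamard matrix of order `n`: entries are `±1` and rows are pairwise
orthogonal, i.e. `∑ i, H k i * H m i = n · δ_{k m}`. -/
def IsHadamard {n : ℕ} (H : Matrix (Fin n) (Fin n) ℝ) : Prop :=
  (∀ k i, H k i = 1 ∨ H k i = -1) ∧
  ∀ k m, (∑ i, H k i * H m i) = if k = m then (n : ℝ) else 0

open Finset

namespace Real

theorem abs_rpow_le_rpow_sub_two_mul_sq {x M p : ℝ} (hx : |x| ≤ M) (hp : 2 ≤ p) :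
    |x| ^ p ≤ M ^ (p - 2) * x ^ 2 := by
  rcases eq_or_ne x 0 with rfl | hx0
  · simp [zero_rpow (by linarith : p ≠ 0)]
  · calc |x| ^ p = |x| ^ (p - 2) * |x| ^ (2 : ℕ) := by
          rw [← rpow_natCast, ← rpow_add (abs_pos.2 hx0)]; norm_num
      _ ≤ M ^ (p - 2) * x ^ 2 := by
          rw [sq_abs]
          gcongr

theorem sum_abs_rpow_le_rpow_sub_two_mul_sum_sq {ι : Type*} (s : Finset ι) {f : ι → ℝ}
    {M p : ℝ} (hf : ∀ i ∈ s, |f i| ≤ M) (hp : 2 ≤ p) :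
    ∑ i ∈ s, |f i| ^ p ≤ M ^ (p - 2) * ∑ i ∈ s, f i ^ 2 := by
  rw [mul_sum]
  exact sum_le_sum fun i hi => abs_rpow_le_rpow_sub_two_mul_sq (hf i hi) hp

theorem rpow_sub_two_mul_sq {x p : ℝ} (hx : 0 ≤ x) (hp : p ≠ 0) :
    x ^ (p - 2) * x ^ 2 = x ^ p := by
  rw [← rpow_natCast, ← rpow_add' hx (by norm_num [hp])]
  norm_num

end Real

namespace IsHadamard

variable {n : ℕ} {H : Matrix (Fin n) (Fin n) ℝ}

theorem abs_apply (hH : IsHadamard H) (k i : Fin n) : |H k i| = 1 := by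
  rcases hH.1 k i with h | h <;> simp [h]

theorem abs_sum_rows_le (hH : IsHadamard H) (F : Finset (Fin n)) (i : Fin n) :
    |∑ k ∈ F, H k i| ≤ #F := by
  simpa [hH.abs_apply] using abs_sum_le_sum_abs (fun k => H k i) F

theorem sum_sq_sum_rows (hH : IsHadamard H) (F : Finset (Fin n)) :
    ∑ i, (∑ k ∈ F, H k i) ^ 2 = #F * n := by
  calc ∑ i, (∑ k ∈ F, H k i) ^ 2 = ∑ k ∈ F, ∑ l ∈ F, ∑ i, H k i * H l i := by
        simp_rw [sq, sum_mul_sum]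
        rw [sum_comm]
        exact sum_congr rfl fun _ _ => sum_comm
    _ = #F * n := by simp [hH.2, sum_ite_eq]

end IsHadamard

theorem hadamard_partial_sums_lp_bound_ge_two_general {n : ℕ}
    (H : Matrix (Fin n) (Fin n) ℝ) (hH : IsHadamard H)
    (p : ℝ) (hp : 2 ≤ p) (m : ℕ) (hm₂ : m ≤ n) :
    (∑ i, |∑ k ∈ Finset.univ.filter fun k : Fin n => (k : ℕ) < m, H k i| ^ p) ^
        (1 / p) ≤ (n : ℝ) := by
  set F := Finset.univ.filter fun k : Fin n => (k : ℕ) < m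
  have hcard : (#F : ℝ) = m := by rw [Fin.card_filter_val_lt, min_eq_right hm₂]
  have hn : (0 : ℝ) ≤ n := n.cast_nonneg
  have hm : (m : ℝ) ≤ n := by exact_mod_cast hm₂
  rw [one_div, Real.rpow_inv_le_iff_of_pos (by positivity) hn (by linarith)]
  calc ∑ i, |∑ k ∈ F, H k i| ^ p ≤ (n : ℝ) ^ (p - 2) * ∑ i, (∑ k ∈ F, H k i) ^ 2 :=
        Real.sum_abs_rpow_le_rpow_sub_two_mul_sum_sq _
          (fun i _ => (hH.abs_sum_rows_le F i).trans (hcard ▸ hm)) hp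
    _ = n ^ (p - 2) * (m * n) := by rw [hH.sum_sq_sum_rows, hcard]
    _ ≤ n ^ (p - 2) * n ^ 2 := by rw [sq]; gcongr
    _ = n ^ p := Real.rpow_sub_two_mul_sq hn (by linarith)

/-- For a Hadamard matrix `H` of order `n` and a real exponent `p ≥ 2`, the
`ℓ_p`-norm of the vector `v(m)` of partial column sums
`v(m)_i = ∑_{k=1}^m H_{k i}` is at most `n`, for every `1 ≤ m ≤ n`. -/
theorem hadamard_partial_sums_lp_bound_ge_two {n : ℕ}
    (H : Matrix (Fin n) (Fin n) ℝ) (hH : IsHadamard H)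
    (p : ℝ) (hp : 2 ≤ p) (m : ℕ) (hm₁ : 1 ≤ m) (hm₂ : m ≤ n) :
    (∑ i, |∑ k ∈ Finset.univ.filter fun k : Fin n => (k : ℕ) < m, H k i| ^ p) ^
        (1 / p) ≤ (n : ℝ) :=
  hadamard_partial_sums_lp_bound_ge_two_general H hH p hp m hm₂
end
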